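/- The full subcategory of SSet spanned by the non-singular simplicial sets is bicomplete: it has all small limits and all small colimits. -/

import Mathlib

open CategoryTheory CategoryTheory.Limits Simplicial SSet

/-- The `i`-th vertex of an `n`-simplex `x`, i.e. `x · εᵢ`, where `εᵢ : [0] ⟶ [n]`
sends `0` to `i`. -/
def SSet.vertex (X : SSet) {n : ℕ} (x : X _⦋n⦌) (i : Fin (n + 1)) : X _⦋0⦌ :=
  X.map (SimplexCategory.const ⦋0⦌ ⦋n⦌ i).op x

/-- A simplex is degenerate if it is obtained from a simplex of strictly lower degree
by the action of a (necessarily non-identity) epimorphism of the simplex category. -/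
def SSet.IsDegenerate (X : SSet) {n : ℕ} (x : X _⦋n⦌) : Prop :=
  ∃ (m : ℕ) (_ : m < n) (σ : (⦋n⦌ : SimplexCategory) ⟶ ⦋m⦌) (y : X _⦋m⦌),
    Epi σ ∧ x = X.map σ.op y

/-- A simplicial set is non-singular if the representing map of each of its
non-degenerate simplices is a monomorphism. -/
def SSet.NonSingular (X : SSet) : Prop :=
  ∀ (n : ℕ) (x : X _⦋n⦌), ¬ X.IsDegenerate x → Mono ((SSet.yonedaEquiv (X := X) (n := ⦋n⦌)).symm x)

/-- The relation `≈ₓ` on `Fin (n + 1)`: `i ≈ₓ k` iff there exists `j` with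
`i ≤ k`, `k ≤ j` and `x·εᵢ = x·εⱼ`. -/
def SSet.approxRel (X : SSet) {n : ℕ} (x : X _⦋n⦌) (i k : Fin (n + 1)) : Prop :=
  ∃ j, i ≤ k ∧ k ≤ j ∧ X.vertex x i = X.vertex x j

/-- The equivalence relation `Rₓ` generated by `≈ₓ`. -/
def SSet.vertexRel (X : SSet) {n : ℕ} (x : X _⦋n⦌) : Fin (n + 1) → Fin (n + 1) → Prop :=
  Relation.EqvGen (X.approxRel x)


/-!
Non-singularity is equivalent to an equational condition: whenever two vertices `x_i = x_j`
(`i < j`) of a simplex `x` coincide, `x = s_i d_{i+1} x`. (Write `x = f^* y` with `y`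
non-degenerate; the vertices of `y` are distinct, so `f` identifies `i` and `i + 1` and factors
through `σ_i`.) Such an equation can be checked after each projection of a limit cone, so
non-singular simplicial sets are closed under limits in `SSet`.

For colimits we show that the inclusion is a right adjoint. Any map `X ⟶ A` to a non-singular
`A` factors through its coimage, a quotient of `X` which embeds into `A` and is therefore
non-singular; these quotients form a solution set, so the general adjoint functor theorem applies,
and a reflective subcategory of the cocomplete category `SSet` is cocomplete.
-/

universe u

open Opposite

namespace SSet

variable {X Y : SSet.{u}}

lemma vertex_map {n m : ℕ} (f : ⦋n⦌ ⟶ ⦋m⦌) (y : X _⦋m⦌) (i : Fin (n + 1)) :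
    X.vertex (X.map f.op y) i = X.vertex y (f.toOrderHom i) := by
  rw [vertex, vertex, ← Functor.map_comp_apply, ← op_comp, SimplexCategory.const_comp]

lemma vertex_app (f : X ⟶ Y) {n : ℕ} (x : X _⦋n⦌) (i : Fin (n + 1)) :
    Y.vertex (f.app _ x) i = f.app _ (X.vertex x i) :=
  (NatTrans.naturality_apply f _ x).symm

lemma mono_yonedaEquiv_symm_iff_injective_vertex {n : ℕ} (x : X _⦋n⦌) :
    Mono (yonedaEquiv.symm x) ↔ Function.Injective (X.vertex x) := by
  simp only [NatTrans.mono_iff_mono_app, mono_iff_injective]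
  constructor
  · intro h i j hij
    have := h (op ⦋0⦌) (a₁ := stdSimplex.objEquiv.symm (SimplexCategory.const _ _ i))
      (a₂ := stdSimplex.objEquiv.symm (SimplexCategory.const _ _ j)) hij
    exact congr($this 0)
  · rintro h ⟨d⟩ s t hst
    induction d using SimplexCategory.rec with | _ d
    obtain ⟨f, rfl⟩ := stdSimplex.objEquiv.symm.surjective s
    obtain ⟨g, rfl⟩ := stdSimplex.objEquiv.symm.surjective t
    change X.map f.op x = X.map g.op x at hst
    refine stdSimplex.ext _ _ fun k => h ?_
    rw [stdSimplex.objEquiv_symm_apply, stdSimplex.objEquiv_symm_apply, ← vertex_map,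
      ← vertex_map, hst]

lemma isDegenerate_iff_mem_degenerate {n : ℕ} (x : X _⦋n⦌) :
    X.IsDegenerate x ↔ x ∈ X.degenerate n := by
  rw [mem_degenerate_iff]
  refine exists_congr fun m => exists_congr fun _ => exists_congr fun f => ?_
  constructor
  · rintro ⟨y, hf, rfl⟩
    exact ⟨hf, y, rfl⟩
  · rintro ⟨hf, y, rfl⟩
    exact ⟨y, hf, rfl⟩

lemma nonSingular_iff_nonsingular : X.NonSingular ↔ X.Nonsingular :=
  ⟨fun h => ⟨fun ⟨x, hx⟩ => h _ x ((isDegenerate_iff_mem_degenerate x).not.2 hx)⟩,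
    fun _ _ x hx => Nonsingular.mono' x ((isDegenerate_iff_mem_degenerate x).not.1 hx)⟩

lemma NonSingular.of_mono (f : X ⟶ Y) [Mono f] (hY : Y.NonSingular) : X.NonSingular := by
  rw [nonSingular_iff_nonsingular] at hY ⊢
  exact Nonsingular.of_mono f

/-- `x = s_i d_{i+1} x` whenever the vertices `x_i` and `x_j` coincide for some `j > i`. -/
def DegeneratesAtRepeatedVertices (X : SSet.{u}) : Prop :=
  ∀ ⦃n : ℕ⦄ (x : X _⦋n + 1⦌) (i : Fin (n + 1)) (j : Fin (n + 2)), i.castSucc < j →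
    X.vertex x i.castSucc = X.vertex x j →
      X.map (SimplexCategory.σ i ≫ SimplexCategory.δ i.succ).op x = x

lemma NonSingular.degeneratesAtRepeatedVertices (hX : X.NonSingular) :
    X.DegeneratesAtRepeatedVertices := by
  intro n x i j hij hx
  obtain ⟨m, f, _, ⟨y, hy⟩, rfl⟩ := X.exists_nonDegenerate x
  have hinj : Function.Injective (X.vertex y) :=
    (mono_yonedaEquiv_symm_iff_injective_vertex y).1
      (hX m y ((isDegenerate_iff_mem_degenerate y).not.2 hy))
  rw [vertex_map, vertex_map] at hx
  have hfi : f.toOrderHom i.castSucc = f.toOrderHom i.succ :=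
    le_antisymm (f.toOrderHom.monotone Fin.castSucc_lt_succ.le)
      (hinj hx ▸ f.toOrderHom.monotone (Fin.castSucc_lt_iff_succ_le.1 hij))
  obtain ⟨g, rfl⟩ := SimplexCategory.eq_σ_comp_of_not_injective' f i hfi
  rw [← Functor.map_comp_apply, ← op_comp, Category.assoc, SimplexCategory.δ_comp_σ_succ_assoc]

lemma DegeneratesAtRepeatedVertices.nonSingular (hX : X.DegeneratesAtRepeatedVertices) :
    X.NonSingular := by
  intro n x hx
  rw [mono_yonedaEquiv_symm_iff_injective_vertex]
  suffices ∀ i j, i < j → X.vertex x i ≠ X.vertex x j by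
    intro i j hij
    by_contra hne
    rcases lt_or_gt_of_ne hne with h | h
    exacts [this i j h hij, this j i h hij.symm]
  intro i j hij hv
  cases n with
  | zero => exact absurd hij (Fin.subsingleton_one.elim i j ▸ lt_irrefl i)
  | succ k =>
    obtain ⟨l, rfl⟩ : ∃ l : Fin (k + 1), l.castSucc = i :=
      ⟨i.castPred (Fin.ne_last_of_lt hij), Fin.castSucc_castPred _ _⟩
    refine hx ⟨k, k.lt_succ_self, SimplexCategory.σ l, X.map (SimplexCategory.δ l.succ).op x,
      inferInstance, ?_⟩
    rw [← Functor.map_comp_apply, ← op_comp, hX x l j hij hv]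

lemma DegeneratesAtRepeatedVertices.of_isLimit {J : Type*} [Category J] {F : J ⥤ SSet.{u}}
    {c : Cone F} (hc : IsLimit c) (hF : ∀ j, (F.obj j).DegeneratesAtRepeatedVertices) :
    c.pt.DegeneratesAtRepeatedVertices := by
  intro n x i j hij hx
  apply yonedaEquiv.symm.injective
  refine hc.hom_ext fun t => ?_
  rw [yonedaEquiv_symm_comp, yonedaEquiv_symm_comp, NatTrans.naturality_apply,
    hF t _ i j hij (by rw [vertex_app, vertex_app, hx])]

instance (J : Type*) [Category J] :
    ObjectProperty.IsClosedUnderLimitsOfShape SSet.NonSingular.{u} J where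
  limitsOfShape_le _ := fun ⟨h⟩ =>
    (DegeneratesAtRepeatedVertices.of_isLimit h.isLimit fun j =>
      (h.prop_diag_obj j).degeneratesAtRepeatedVertices).nonSingular

instance : HasLimits (ObjectProperty.FullSubcategory SSet.NonSingular.{u}) :=
  ⟨fun _ _ => inferInstance⟩

instance : PreservesLimits (ObjectProperty.ι SSet.NonSingular.{u}) :=
  ⟨fun {_} _ => inferInstance⟩

section Coimage

variable (X : SSet.{u})

def quotient (r : ∀ k, X.obj k → X.obj k → Prop)
    (hr : ∀ ⦃k l⦄ (f : k ⟶ l) ⦃a b⦄, r k a b → r l (X.map f a) (X.map f b)) : SSet.{u} where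
  obj k := Quot (r k)
  map f := TypeCat.ofHom (Quot.map (X.map f) (hr f))
  map_id k := by
    ext q
    induction q using Quot.ind with
    | _ a => exact congr_arg (Quot.mk _) (Functor.map_id_apply X k a)
  map_comp f g := by
    ext q
    induction q using Quot.ind with
    | _ a => exact congr_arg (Quot.mk _) (Functor.map_comp_apply X f g a)

variable {X} {A : SSet.{u}} (h : X ⟶ A)

def kernelRel (k : SimplexCategoryᵒᵖ) (a b : X.obj k) : Prop := h.app k a = h.app k b

lemma kernelRel_map ⦃k l : SimplexCategoryᵒᵖ⦄ (f : k ⟶ l) ⦃a b : X.obj k⦄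
    (hab : kernelRel h k a b) : kernelRel h l (X.map f a) (X.map f b) := by
  rw [kernelRel, NatTrans.naturality_apply, NatTrans.naturality_apply, hab]

abbrev coimage : SSet.{u} := X.quotient (kernelRel h) (kernelRel_map h)

def coimage.ι : coimage h ⟶ A where
  app k := TypeCat.ofHom (Quot.lift (h.app k) fun _ _ hab => hab)
  naturality k l f := by
    ext q
    induction q using Quot.ind with
    | _ a => exact NatTrans.naturality_apply h f a

instance : Mono (coimage.ι h) := by
  rw [NatTrans.mono_iff_mono_app]
  refine fun k => (mono_iff_injective _).2 fun q q' => ?_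
  induction q using Quot.ind with
  | _ a =>
    induction q' using Quot.ind with
    | _ b => exact fun hab => Quot.sound hab

lemma solutionSetCondition_ι_nonSingular :
    SolutionSetCondition.{u} (ObjectProperty.ι SSet.NonSingular.{u}) := fun Y =>
  ⟨{r : ∀ k, Y.obj k → Y.obj k → Prop // ∃ hr, (Y.quotient r hr).NonSingular},
    fun r => ⟨Y.quotient r.1 r.2.choose, r.2.choose_spec⟩,
    fun r => { app k := TypeCat.ofHom (Quot.mk _) },
    fun A h => ⟨⟨kernelRel h, kernelRel_map h, A.2.of_mono (coimage.ι h)⟩,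
      ObjectProperty.homMk (coimage.ι h), rfl⟩⟩

end Coimage

end SSet

/-- The full subcategory of `SSet` spanned by the non-singular simplicial sets is
bicomplete: it has all small limits and all small colimits. -/
theorem nonsingular_bicomplete :
    HasLimits (ObjectProperty.FullSubcategory SSet.NonSingular) ∧
      HasColimits (ObjectProperty.FullSubcategory SSet.NonSingular) := by
  have : (ObjectProperty.ι SSet.NonSingular).IsRightAdjoint :=
    isRightAdjoint_of_preservesLimits_of_solutionSetCondition _
      SSet.solutionSetCondition_ι_nonSingular
  let : Reflective (ObjectProperty.ι SSet.NonSingular) := ⟨_, Adjunction.ofIsRightAdjoint _⟩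
  exact ⟨inferInstance, hasColimits_of_reflective (ObjectProperty.ι SSet.NonSingular)⟩
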